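/- arXiv:1211.3223 — 3 statements merged into one kernel-verified Lean document; each statement's English description precedes it below -/
import Mathlib

section
/- Let (E, d) be a metric space admitting the metric doubling constant C₀, let r > 0, and let {x_j}_{j ∈ J} be a countable family of points of E with d(x_i, x_j) ≥ r for all i ≠ j. Then there exists a coloring ξ : J → {1, 2, …, C₀^5} such that whenever i ≠ j and ξ(i) = ξ(j), one has d(x_i, x_j) > 10r. -/
/-!
Cover the ball of radius `10 r ≤ 2⁵ · (r / 3)` around `xᵢ` by `C₀⁵` balls of radius `r / 3`:
each of them contains at most one point of the `r`-separated family, so `xᵢ` has fewer than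
`C₀⁵` neighbours at distance `≤ 10 r`. A greedy colouring along a well-order of `J` then
never runs out of the `C₀⁵` colours.
-/

/-- A metric space `E` admits the metric doubling constant `C₀` if every closed ball
of radius `2r` can be covered by at most `C₀` closed balls of radius `r`. -/
def MetricDoublingConst (E : Type*) [MetricSpace E] (C₀ : ℕ) : Prop :=
  ∀ (x : E) (r : ℝ), 0 < r →
    ∃ t : Finset E, t.card ≤ C₀ ∧
      Metric.closedBall x (2 * r) ⊆ ⋃ y ∈ t, Metric.closedBall y r

open Metric Set

namespace SimpleGraph

variable {V : Type*} (G : SimpleGraph V)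

theorem colorable_of_forall_encard_neighborSet_lt {n : ℕ}
    (h : ∀ v, (G.neighborSet v).encard < n) : G.Colorable n := by
  let lt : V → V → Prop := WellOrderingRel
  have free : ∀ v (c : {w // lt w v} → Fin n), ∃ k, k ∉ c '' {w | G.Adj v w} := by
    intro v c
    by_contra! hall
    have hpre : {w : {w // lt w v} | G.Adj v w}.encard ≤ (G.neighborSet v).encard :=
      encard_le_encard_of_injOn (fun w hw => hw) Subtype.val_injective.injOn
    have : (n : ℕ∞) ≤ (G.neighborSet v).encard :=
      calc (n : ℕ∞) = (univ : Set (Fin n)).encard := by simp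
        _ ≤ (c '' {w | G.Adj v w}).encard := encard_le_encard fun k _ => hall k
        _ ≤ (G.neighborSet v).encard := (encard_image_le _ _).trans hpre
    exact (h v).not_ge this
  let color : V → Fin n :=
    WellOrderingRel.isWellOrder.wf.fix fun v rec => (free v fun w => rec w.1 w.2).choose
  have color_ne : ∀ v w, lt w v → G.Adj v w → color w ≠ color v := by
    intro v w hwv hvw hc
    rw [show color v = (free v fun w => color w.1).choose from
      WellOrderingRel.isWellOrder.wf.fix_eq _ v] at hc
    exact (free v fun w => color w.1).choose_spec ⟨⟨w, hwv⟩, hvw, hc⟩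
  refine ⟨Coloring.mk color fun {v w} hvw => ?_⟩
  rcases trichotomous_of lt v w with hvw' | rfl | hwv
  · exact color_ne w v hvw' hvw.symm
  · exact (G.irrefl hvw).elim
  · exact (color_ne v w hwv hvw).symm

end SimpleGraph

namespace MetricDoublingConst

variable {E : Type*} [MetricSpace E] {C₀ : ℕ}

theorem exists_closedBall_pow_subset_biUnion (hE : MetricDoublingConst E C₀) {s : ℝ}
    (hs : 0 < s) (k : ℕ) (x : E) :
    ∃ t : Finset E, t.card ≤ C₀ ^ k ∧ closedBall x (2 ^ k * s) ⊆ ⋃ y ∈ t, closedBall y s := by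
  classical
  induction k generalizing x with
  | zero => exact ⟨{x}, by simp, by simp⟩
  | succ k ih =>
    obtain ⟨t₀, ht₀_card, ht₀⟩ := hE x (2 ^ k * s) (by positivity)
    choose t ht_card ht using ih
    refine ⟨t₀.biUnion t, ?_, ?_⟩
    · calc (t₀.biUnion t).card ≤ ∑ y ∈ t₀, (t y).card := Finset.card_biUnion_le
        _ ≤ t₀.card * C₀ ^ k := Finset.sum_le_card_nsmul _ _ _ fun y _ => ht_card y
        _ ≤ C₀ ^ (k + 1) := by rw [pow_succ']; gcongr
    · intro z hz
      rw [pow_succ', mul_assoc] at hz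
      obtain ⟨y, hy, hzy⟩ := mem_iUnion₂.mp (ht₀ hz)
      obtain ⟨w, hw, hzw⟩ := mem_iUnion₂.mp (ht y hzy)
      exact mem_iUnion₂.mpr ⟨w, Finset.mem_biUnion.mpr ⟨y, hy, hw⟩, hzw⟩

theorem encard_preimage_closedBall_le_pow (hE : MetricDoublingConst E C₀) {ι : Type*}
    {f : ι → E} {ε : ℝ} (hε : 0 < ε) (hf : Pairwise fun i j => 2 * ε < dist (f i) (f j))
    (x : E) (k : ℕ) : (f ⁻¹' closedBall x (2 ^ k * ε)).encard ≤ C₀ ^ k := by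
  have : Nonempty E := ⟨x⟩
  obtain ⟨t, ht_card, ht⟩ := hE.exists_closedBall_pow_subset_biUnion hε k x
  choose! center hcenter_mem hcenter using fun i (hi : f i ∈ closedBall x (2 ^ k * ε)) =>
    mem_iUnion₂.mp (ht hi)
  have hinj : InjOn center (f ⁻¹' closedBall x (2 ^ k * ε)) := by
    intro i hi j hj hij
    by_contra hne
    have := dist_triangle_right (f i) (f j) (center i)
    have hi' := mem_closedBall.mp (hcenter i hi)
    have hj' := mem_closedBall.mp (hcenter j hj)
    rw [← hij] at hj'
    linarith [hf hne]
  calc (f ⁻¹' closedBall x (2 ^ k * ε)).encard ≤ (t : Set E).encard :=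
        encard_le_encard_of_injOn (fun i hi => hcenter_mem i hi) hinj
    _ = t.card := encard_coe_eq_coe_finsetCard t
    _ ≤ C₀ ^ k := by exact_mod_cast ht_card

theorem encard_preimage_closedBall_ten_mul_le (hE : MetricDoublingConst E C₀) {ι : Type*}
    {f : ι → E} {r : ℝ} (hr : 0 < r) (hf : ∀ i j, i ≠ j → r ≤ dist (f i) (f j)) (x : E) :
    (f ⁻¹' closedBall x (10 * r)).encard ≤ C₀ ^ 5 :=
  calc (f ⁻¹' closedBall x (10 * r)).encard ≤ (f ⁻¹' closedBall x (2 ^ 5 * (r / 3))).encard :=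
        encard_le_encard (preimage_mono (closedBall_subset_closedBall (by linarith)))
    _ ≤ C₀ ^ 5 := hE.encard_preimage_closedBall_le_pow (by positivity)
        (fun i j hij => by linarith [hf i j hij]) x 5

end MetricDoublingConst

theorem separated_family_coloring_general {E : Type*} [MetricSpace E] {C₀ : ℕ}
    (hE : MetricDoublingConst E C₀) {J : Type*}
    (xs : J → E) (r : ℝ) (hr : 0 < r)
    (hsep : ∀ i j : J, i ≠ j → r ≤ dist (xs i) (xs j)) :
    ∃ ξ : J → Fin (C₀ ^ 5),
      ∀ i j : J, i ≠ j → ξ i = ξ j → 10 * r < dist (xs i) (xs j) := by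
  let G := SimpleGraph.fromRel fun i j : J => dist (xs i) (xs j) ≤ 10 * r
  have hG : ∀ {i j}, G.Adj i j ↔ i ≠ j ∧ dist (xs i) (xs j) ≤ 10 * r := by
    simp [G, dist_comm]
  have hnear : ∀ i, (G.neighborSet i).encard < C₀ ^ 5 := by
    intro i
    have hsub : insert i (G.neighborSet i) ⊆ xs ⁻¹' closedBall (xs i) (10 * r) :=
      insert_subset (mem_closedBall_self (by positivity)) fun j hj => by
        rw [mem_preimage, mem_closedBall, dist_comm]
        exact (hG.mp hj).2
    have hle : (insert i (G.neighborSet i)).encard ≤ C₀ ^ 5 :=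
      (encard_le_encard hsub).trans (hE.encard_preimage_closedBall_ten_mul_le hr hsep _)
    calc (G.neighborSet i).encard < (insert i (G.neighborSet i)).encard :=
          ((finite_of_encard_le_coe hle).subset (subset_insert _ _)).encard_lt_encard
            (ssubset_insert G.notMem_neighborSet_self)
      _ ≤ C₀ ^ 5 := hle
  obtain ⟨ξ⟩ := G.colorable_of_forall_encard_neighborSet_lt hnear
  refine ⟨ξ, fun i j hij hξ => ?_⟩
  by_contra! hle
  exact ξ.valid (hG.mpr ⟨hij, hle⟩) hξ

/-- (7)–(8): a countable `r`-separated family in a space with doubling constant `C₀`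
can be colored with `C₀^5` colors so that points of the same color lie at mutual
distance greater than `10 r`. -/
theorem separated_family_coloring {E : Type*} [MetricSpace E] {C₀ : ℕ}
    (hE : MetricDoublingConst E C₀) {J : Type*} [Countable J]
    (xs : J → E) (r : ℝ) (hr : 0 < r)
    (hsep : ∀ i j : J, i ≠ j → r ≤ dist (xs i) (xs j)) :
    ∃ ξ : J → Fin (C₀ ^ 5),
      ∀ i j : J, i ≠ j → ξ i = ξ j → 10 * r < dist (xs i) (xs j) :=
  separated_family_coloring_general hE xs r hr hsep
end

section
/- Let (E, d) be a separable metric space, let x₀ ∈ E, let N ≥ 1 be an integer, let α ∈ (0, 1) and C > 0. Suppose that for each integer m ≥ 0 there is a map F_m : E → ℝ^N with F_m(x₀) = 0 such that C⁻¹ · d(x,y)^α ≤ ‖F_m(x) − F_m(y)‖ ≤ C · d(x,y)^α for all x, y ∈ B(x₀, 2^m). Then there exists a map F : E → ℝ^N such that C⁻¹ · d(x,y)^α ≤ ‖F(x) − F(y)‖ ≤ C · d(x,y)^α for all x, y ∈ E. -/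
/-!
Take the pointwise limit of `F m` along an ultrafilter on `ℕ` finer than `atTop`. Every point
lies in `B(x₀, 2^m)` for all large `m`, so the two-sided snowflake bounds hold eventually for
every pair of points; comparing with `F m x₀ = 0` they also keep `F m x` in a fixed compact
ball, so the limit exists, and the bounds are closed conditions, hence survive in the limit.
-/

open Filter Metric Topology

theorem exists_tendsto_ultrafilter_of_eventually_mem_compact {ι X Y : Type*} [TopologicalSpace Y]
    (φ : Ultrafilter ι) (f : ι → X → Y)
    (hf : ∀ x, ∃ K : Set Y, IsCompact K ∧ ∀ᶠ i in (φ : Filter ι), f i x ∈ K) :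
    ∃ g : X → Y, ∀ x, Tendsto (fun i => f i x) φ (𝓝 (g x)) := by
  choose K hK hfK using hf
  have hlim : ∀ x, ∃ y, Tendsto (fun i => f i x) φ (𝓝 y) := fun x =>
    let ⟨y, _, hy⟩ := (hK x).ultrafilter_le_nhds (φ.map (f · x)) (le_principal_iff.2 (hfK x))
    ⟨y, hy⟩
  exact ⟨fun x => (hlim x).choose, fun x => (hlim x).choose_spec⟩

theorem limit_of_snowflake_embeddings_general {E : Type*} [MetricSpace E]
    (x₀ : E) (N : ℕ) (α : ℝ)
    (C : ℝ) (F : ℕ → E → EuclideanSpace ℝ (Fin N))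
    (hF₀ : ∀ m : ℕ, F m x₀ = 0)
    (hF : ∀ m : ℕ, ∀ x ∈ Metric.closedBall x₀ (2 ^ m), ∀ y ∈ Metric.closedBall x₀ (2 ^ m),
      C⁻¹ * dist x y ^ α ≤ ‖F m x - F m y‖ ∧ ‖F m x - F m y‖ ≤ C * dist x y ^ α) :
    ∃ G : E → EuclideanSpace ℝ (Fin N),
      ∀ x y : E,
        C⁻¹ * dist x y ^ α ≤ ‖G x - G y‖ ∧ ‖G x - G y‖ ≤ C * dist x y ^ α := by
  set φ := Ultrafilter.of (atTop : Filter ℕ)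
  have hball : ∀ x : E, ∀ᶠ m in (φ : Filter ℕ), x ∈ closedBall x₀ (2 ^ m) := fun x =>
    Ultrafilter.of_le _ <|
      (tendsto_pow_atTop_atTop_of_one_lt one_lt_two).eventually_ge_atTop (dist x x₀)
  have hbdd : ∀ x : E, ∀ᶠ m in (φ : Filter ℕ), F m x ∈ closedBall 0 (C * dist x x₀ ^ α) :=
    fun x => by
      filter_upwards [hball x] with m hm
      simpa [hF₀, dist_eq_norm] using
        (hF m x hm x₀ (mem_closedBall_self (by positivity))).2
  obtain ⟨G, hG⟩ := exists_tendsto_ultrafilter_of_eventually_mem_compact φ F fun x =>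
    ⟨_, isCompact_closedBall _ _, hbdd x⟩
  refine ⟨G, fun x y => ?_⟩
  have hev : ∀ᶠ m in (φ : Filter ℕ),
      ‖F m x - F m y‖ ∈ Set.Icc (C⁻¹ * dist x y ^ α) (C * dist x y ^ α) := by
    filter_upwards [hball x, hball y] with m hmx hmy using hF m x hmx y hmy
  exact isClosed_Icc.mem_of_tendsto ((hG x).sub (hG y)).norm hev

/-- The limiting argument for unbounded spaces: if a separable metric space `E` admits,
for each `m ≥ 0`, an `α`-snowflake bilipschitz map `F_m : E → ℝ^N` (with uniform constant
`C` and `F_m x₀ = 0`) on the ball `B(x₀, 2^m)`, then `E` admits a global `α`-snowflake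
bilipschitz map `F : E → ℝ^N` with the same constant. -/
theorem limit_of_snowflake_embeddings {E : Type*} [MetricSpace E]
    [TopologicalSpace.SeparableSpace E]
    (x₀ : E) (N : ℕ) (hN : 1 ≤ N) (α : ℝ) (hα₀ : 0 < α) (hα₁ : α < 1)
    (C : ℝ) (hC : 0 < C) (F : ℕ → E → EuclideanSpace ℝ (Fin N))
    (hF₀ : ∀ m : ℕ, F m x₀ = 0)
    (hF : ∀ m : ℕ, ∀ x ∈ Metric.closedBall x₀ (2 ^ m), ∀ y ∈ Metric.closedBall x₀ (2 ^ m),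
      C⁻¹ * dist x y ^ α ≤ ‖F m x - F m y‖ ∧ ‖F m x - F m y‖ ≤ C * dist x y ^ α) :
    ∃ G : E → EuclideanSpace ℝ (Fin N),
      ∀ x y : E,
        C⁻¹ * dist x y ^ α ≤ ‖G x - G y‖ ∧ ‖G x - G y‖ ≤ C * dist x y ^ α :=
  limit_of_snowflake_embeddings_general x₀ N α C F hF₀ hF
end

section
/- Let (E, d) be a metric space, let k₀ ∈ ℤ, let α ∈ (1/2, 1), let τ > 0 be small enough (it suffices that τ ≤ min(1/2, 1 − α) and τ ln(1/τ) is below an absolute threshold), and set r_ℓ = τ^{2ℓ} for ℓ ∈ ℤ. Suppose (f_ℓ)_{ℓ ≥ k₀} are maps from E to ℝ^M, each Lipschitz with Lipschitz constant at most τ² r_ℓ^{-1}. Then for every k ≥ k₀ the partial sum F_k(x) = Σ_{k₀ ≤ ℓ ≤ k} r_ℓ^α f_ℓ(x) is Lipschitz from (E, d) to ℝ^M with Lipschitz constant at most r_k^{α−1}. -/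
/-!
With `ρ = (τ²)^(α-1) > 1` one has `r_ℓ^α · τ² r_ℓ⁻¹ = τ² ρ^ℓ`, so the triangle inequality bounds the
Lipschitz constant of `F_k` by the geometric sum `τ² Σ_{ℓ ≤ k} ρ^ℓ ≤ τ² ρ^k / (1 - ρ⁻¹)`.
This is at most `ρ^k = r_k^(α-1)` as soon as `τ² + (τ²)^(1-α) ≤ 1`, which Bernoulli's inequality
gives for `τ ≤ min(1/2, 1-α)`.
-/

open Finset

theorem norm_sum_smul_sub_sum_smul_le {ι 𝕜 V : Type*} [NormedField 𝕜] [SeminormedAddCommGroup V]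
    [NormedSpace 𝕜 V] (s : Finset ι) (c : ι → 𝕜) (u v : ι → V) :
    ‖∑ i ∈ s, c i • u i - ∑ i ∈ s, c i • v i‖ ≤ ∑ i ∈ s, ‖c i‖ * ‖u i - v i‖ := by
  rw [← sum_sub_distrib]
  refine (norm_sum_le _ _).trans_eq (sum_congr rfl fun i _ => ?_)
  rw [← smul_sub, norm_smul]

theorem sum_Icc_zpow_le_of_one_lt {ρ : ℝ} (hρ : 1 < ρ) (m n : ℤ) :
    ∑ ℓ ∈ Icc m n, ρ ^ ℓ ≤ ρ ^ n / (1 - ρ⁻¹) := by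
  have hρ0 : 0 < ρ := zero_lt_one.trans hρ
  have hgap : 0 < 1 - ρ⁻¹ := sub_pos.2 (inv_lt_one_of_one_lt₀ hρ)
  rcases lt_or_ge n (m - 1) with hnm | hmn
  · rw [Icc_eq_empty_of_lt (by omega), sum_empty]
    positivity
  induction n, hmn using Int.leInduction with
  | base => rw [Icc_eq_empty_of_lt (by omega), sum_empty]; positivity
  | succ n hmn ih =>
    rw [← insert_Icc_right_eq_Icc_add_one (by omega), sum_insert (by simp),
      zpow_add_one₀ hρ0.ne']
    calc ρ ^ n * ρ + ∑ ℓ ∈ Icc m n, ρ ^ ℓ ≤ ρ ^ n * ρ + ρ ^ n / (1 - ρ⁻¹) := by gcongr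
      _ = ρ ^ n * ρ / (1 - ρ⁻¹) := by
        rw [eq_div_iff hgap.ne', add_mul, div_mul_cancel₀ _ hgap.ne', mul_sub, mul_one,
          mul_assoc, mul_inv_cancel₀ hρ0.ne']
        ring

theorem sq_add_rpow_sq_le_one {τ β : ℝ} (hτ0 : 0 ≤ τ) (hτ : τ ≤ 1 / 2) (hτβ : τ ≤ β)
    (hβ : β ≤ 1) : τ ^ 2 + (τ ^ 2) ^ β ≤ 1 := by
  have hbernoulli : (τ ^ 2) ^ β ≤ 1 + β * (τ ^ 2 - 1) := by
    have := rpow_one_add_le_one_add_mul_self (s := τ ^ 2 - 1) (by nlinarith) (hτ0.trans hτβ) hβ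
    rwa [add_sub_cancel] at this
  nlinarith

theorem zpow_two_mul_rpow (τ : ℝ) (ℓ : ℤ) (γ : ℝ) :
    (τ ^ (2 * ℓ)) ^ γ = ((τ ^ 2) ^ γ) ^ ℓ := by
  rw [Real.rpow_zpow_comm (by positivity), zpow_mul, zpow_two, sq]

theorem zpow_two_mul_rpow_mul_inv {τ : ℝ} (hτ : τ ≠ 0) (ℓ : ℤ) (γ : ℝ) :
    (τ ^ (2 * ℓ)) ^ γ * (τ ^ (2 * ℓ))⁻¹ = ((τ ^ 2) ^ (γ - 1)) ^ ℓ := by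
  rw [← zpow_two_mul_rpow, Real.rpow_sub_one (zpow_ne_zero _ hτ), div_eq_mul_inv]

/-- (19)–(22): there is an absolute threshold `ε > 0` such that if `0 < τ ≤ min(1/2, 1-α)`
and `τ ln(1/τ) ≤ ε`, and if each `f_ℓ` (for `ℓ ≥ k₀`) is Lipschitz with constant at most
`τ² r_ℓ⁻¹` (where `r_ℓ = τ^{2ℓ}`), then each partial sum
`F_k(x) = Σ_{k₀ ≤ ℓ ≤ k} r_ℓ^α f_ℓ(x)` is Lipschitz with constant at most `r_k^{α-1}`. -/
theorem partial_sums_lipschitz :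
    ∃ ε : ℝ, 0 < ε ∧
      ∀ {E : Type} [MetricSpace E], ∀ (M : ℕ) (k₀ : ℤ) (α τ : ℝ),
        1 / 2 < α → α < 1 → 0 < τ → τ ≤ min (1 / 2) (1 - α) →
        τ * Real.log (1 / τ) ≤ ε →
        ∀ f : ℤ → E → EuclideanSpace ℝ (Fin M),
          (∀ ℓ : ℤ, k₀ ≤ ℓ → ∀ x y : E,
            ‖f ℓ x - f ℓ y‖ ≤ τ ^ 2 * (τ ^ (2 * ℓ))⁻¹ * dist x y) →
          ∀ k : ℤ, k₀ ≤ k → ∀ x y : E,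
            ‖(∑ ℓ ∈ Finset.Icc k₀ k, ((τ ^ (2 * ℓ)) ^ α) • f ℓ x) -
                ∑ ℓ ∈ Finset.Icc k₀ k, ((τ ^ (2 * ℓ)) ^ α) • f ℓ y‖ ≤
              (τ ^ (2 * k)) ^ (α - 1) * dist x y := by
  refine ⟨1, one_pos, fun {E} _ M k₀ α τ hα hα1 hτ hτmin _ f hf k _ x y => ?_⟩
  have hτ2 : τ ≤ 1 / 2 := hτmin.trans (min_le_left _ _)
  set ρ := (τ ^ 2) ^ (α - 1) with hρ_def
  have hρ : 1 < ρ :=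
    Real.one_lt_rpow_of_pos_of_lt_one_of_neg (by positivity) (by nlinarith) (by linarith)
  have hgap : τ ^ 2 ≤ 1 - ρ⁻¹ := by
    have := sq_add_rpow_sq_le_one hτ.le hτ2 (hτmin.trans (min_le_right _ _)) (by linarith)
    rw [hρ_def, ← Real.rpow_neg (by positivity), neg_sub]
    linarith
  have hgap_pos : 0 < 1 - ρ⁻¹ := sub_pos.2 (inv_lt_one_of_one_lt₀ hρ)
  have hterm : ∀ ℓ ∈ Icc k₀ k,
      ‖(τ ^ (2 * ℓ)) ^ α‖ * ‖f ℓ x - f ℓ y‖ ≤ τ ^ 2 * dist x y * ρ ^ ℓ := by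
    intro ℓ hℓ
    rw [Real.norm_of_nonneg (by positivity), ← zpow_two_mul_rpow_mul_inv hτ.ne']
    calc _ ≤ (τ ^ (2 * ℓ)) ^ α * (τ ^ 2 * (τ ^ (2 * ℓ))⁻¹ * dist x y) := by
          gcongr
          exact hf ℓ (mem_Icc.1 hℓ).1 x y
      _ = _ := by ring
  calc _ ≤ ∑ ℓ ∈ Icc k₀ k, ‖(τ ^ (2 * ℓ)) ^ α‖ * ‖f ℓ x - f ℓ y‖ :=
        norm_sum_smul_sub_sum_smul_le _ _ _ _
    _ ≤ ∑ ℓ ∈ Icc k₀ k, τ ^ 2 * dist x y * ρ ^ ℓ := sum_le_sum hterm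
    _ = τ ^ 2 * dist x y * ∑ ℓ ∈ Icc k₀ k, ρ ^ ℓ := (mul_sum _ _ _).symm
    _ ≤ (1 - ρ⁻¹) * dist x y * (ρ ^ k / (1 - ρ⁻¹)) := by
        have := zpow_pos (zero_lt_one.trans hρ) k
        gcongr
        exact sum_Icc_zpow_le_of_one_lt hρ _ _
    _ = (τ ^ (2 * k)) ^ (α - 1) * dist x y := by
        rw [mul_right_comm, mul_div_cancel₀ _ hgap_pos.ne', zpow_two_mul_rpow, mul_comm]
end
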